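/- For all n ≥ 3, (j₃(n−3))² + 3·J₃(n)·j₃(n) = 4ⁿ, where J₃ and j₃ are the third-order Jacobsthal and third-order Jacobsthal-Lucas numbers. -/
import Mathlib

def J3 : ℕ → ℤ
  | 0 => 0
  | 1 => 1
  | 2 => 1
  | n + 3 => J3 (n + 2) + J3 (n + 1) + 2 * J3 n

def j3 : ℕ → ℤ
  | 0 => 2
  | 1 => 1
  | 2 => 5
  | n + 3 => j3 (n + 2) + j3 (n + 1) + 2 * j3 n

def c3 (n : ℕ) : ℤ := if n % 3 = 0 then -2 else if n % 3 = 1 then 3 else -1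

lemma c3_add3 (n : ℕ) : c3 (n + 3) = c3 n := by
  simp [c3, Nat.add_mod_right]

lemma c3_sum (n : ℕ) : c3 (n + 2) + c3 (n + 1) + 2 * c3 n = c3 (n + 3) := by
  have h : n % 3 = 0 ∨ n % 3 = 1 ∨ n % 3 = 2 := by omega
  rcases h with h | h | h <;>
    simp [c3, Nat.add_mod, h]

lemma key : ∀ n : ℕ, 7 * J3 n = 2 ^ (n + 1) + c3 n ∧ 7 * j3 n = 2 ^ (n + 3) - 3 * c3 n := by
  have H : ∀ n : ℕ,
      (7 * J3 n = 2 ^ (n + 1) + c3 n ∧ 7 * j3 n = 2 ^ (n + 3) - 3 * c3 n) ∧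
      (7 * J3 (n+1) = 2 ^ (n + 2) + c3 (n+1) ∧ 7 * j3 (n+1) = 2 ^ (n + 4) - 3 * c3 (n+1)) ∧
      (7 * J3 (n+2) = 2 ^ (n + 3) + c3 (n+2) ∧ 7 * j3 (n+2) = 2 ^ (n + 5) - 3 * c3 (n+2)) := by
    intro n
    induction n with
    | zero => norm_num [J3, j3, c3]
    | succ k ih =>
      obtain ⟨⟨h1, h2⟩, ⟨h3, h4⟩, ⟨h5, h6⟩⟩ := ih
      refine ⟨⟨h3, h4⟩, ⟨h5, h6⟩, ?_, ?_⟩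
      · show 7 * J3 (k + 3) = _
        rw [J3]
        have hs := c3_sum k
        ring_nf
        ring_nf at h1 h3 h5 hs ⊢
        linarith [hs]
      · show 7 * j3 (k + 3) = _
        rw [j3]
        have hs := c3_sum k
        ring_nf
        ring_nf at h2 h4 h6 hs ⊢
        linarith [hs]
  exact fun n => (H n).1

theorem stmt6 : ∀ n : ℕ, 3 ≤ n → (j3 (n - 3)) ^ 2 + 3 * J3 n * j3 n = 4 ^ n := by
  intro n hn
  obtain ⟨m, rfl⟩ : ∃ m, n = m + 3 := ⟨n - 3, by omega⟩
  have hm : m + 3 - 3 = m := by omega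
  rw [hm]
  obtain ⟨hJ, hj⟩ := key (m + 3)
  obtain ⟨-, hjm⟩ := key m
  rw [c3_add3] at hJ hj
  have h4 : (4 : ℤ) ^ (m + 3) = (2 ^ (m + 3)) ^ 2 := by
    rw [← pow_mul, show (4:ℤ) = 2 ^ 2 by norm_num, ← pow_mul]
    ring_nf
  have h26 : (2 : ℤ) ^ (m + 6) = 8 * 2 ^ (m + 3) := by ring
  have h24 : (2 : ℤ) ^ (m + 4) = 2 * 2 ^ (m + 3) := by ring
  rw [h26] at hj
  rw [h24] at hJ
  have big : 49 * ((j3 m) ^ 2 + 3 * J3 (m + 3) * j3 (m + 3)) = 49 * (2 ^ (m + 3)) ^ 2 := by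
    linear_combination (7 * j3 m + 2 ^ (m + 3) - 3 * c3 m) * hjm +
      21 * J3 (m + 3) * hj + 3 * (8 * 2 ^ (m + 3) - 3 * c3 m) * hJ
  rw [h4]
  linarith
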